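/- For every integer n ≥ 1, every integer k, and every real x: (−1)^n · C_{n,p,q}^{(k)}(x)/n! = Σ_{m=1}^{n} binom(n−1,m−1) · Ĉ_{m,p,q}^{(k)}(x)/m!, and symmetrically (−1)^n · Ĉ_{n,p,q}^{(k)}(x)/n! = Σ_{m=1}^{n} binom(n−1,m−1) · C_{m,p,q}^{(k)}(x)/m!. -/

import Mathlib

open Finset

/-- The `(p,q)`-integer `[m]_{p,q} = (p^m - q^m)/(p - q)`. -/
noncomputable def pqInt (p q : ℝ) (m : ℕ) : ℝ := (p ^ m - q ^ m) / (p - q)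

/-- The exponential generating function `∑ f n * t^n / n!` of a sequence `f`. -/
noncomputable def egf (f : ℕ → ℝ) : PowerSeries ℝ :=
  PowerSeries.mk fun n => f n / n.factorial

/-- The power series `∑_{m ≥ 0} (1 - e^{-t})^m / [m+1]_{p,q}^k`
(which equals `Li_{k,p,q}(1 - e^{-t}) / (1 - e^{-t})`).
Since `(1 - e^{-t})^m` has order at least `m`, the `n`-th coefficient only
receives contributions from `m ≤ n`. -/
noncomputable def pqBernSeries (p q : ℝ) (k : ℤ) : PowerSeries ℝ :=
  PowerSeries.mk fun n =>
    ∑ m ∈ Finset.range (n + 1),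
      PowerSeries.coeff n ((1 - PowerSeries.rescale (-1) (PowerSeries.exp ℝ)) ^ m) /
        pqInt p q (m + 1) ^ k

/-- The unsigned Stirling numbers of the first kind, defined by the recurrence
`S1(n+1, m+1) = n * S1(n, m+1) + S1(n, m)`, so that
`x(x+1)⋯(x+n-1) = ∑_{m=0}^{n} S1(n,m) x^m`. -/
def stirling1 : ℕ → ℕ → ℕ
  | 0, 0 => 1
  | 0, _ + 1 => 0
  | _ + 1, 0 => 0
  | n + 1, m + 1 => n * stirling1 n (m + 1) + stirling1 n m

/-- Carlitz's weighted Stirling numbers of the first kind,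
`S1(n,m,x) = ∑_{i=0}^{n-m} binom(m+i,i) S1(n,m+i) x^i`. -/
noncomputable def stirling1W (n m : ℕ) (x : ℝ) : ℝ :=
  ∑ i ∈ Finset.range (n - m + 1), ((m + i).choose i : ℝ) * (stirling1 n (m + i) : ℝ) * x ^ i

/-- Carlitz's weighted Stirling numbers of the second kind,
`S2(n,m,x) = (1/m!) ∑_{j=0}^{m} (-1)^(m-j) binom(m,j) (x+j)^n`. -/
noncomputable def stirling2W (n m : ℕ) (x : ℝ) : ℝ :=
  (1 / (m.factorial : ℝ)) *
    ∑ j ∈ Finset.range (m + 1), (-1 : ℝ) ^ (m - j) * (m.choose j : ℝ) * (x + j) ^ n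

/-- The `(p,q)`-poly-Cauchy polynomials of the first kind. -/
noncomputable def pqCauchy1 (p q : ℝ) (k : ℤ) (x : ℝ) (n : ℕ) : ℝ :=
  ∑ m ∈ Finset.range (n + 1),
    (-1 : ℝ) ^ (n - m) * (stirling1 n m : ℝ) *
      ∑ l ∈ Finset.range (m + 1),
        (m.choose l : ℝ) * (-x) ^ l / pqInt p q (m - l + 1) ^ k

/-- The `(p,q)`-poly-Cauchy polynomials of the second kind. -/
noncomputable def pqCauchy2 (p q : ℝ) (k : ℤ) (x : ℝ) (n : ℕ) : ℝ :=
  (-1 : ℝ) ^ n *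
    ∑ m ∈ Finset.range (n + 1),
      (stirling1 n m : ℝ) *
        ∑ l ∈ Finset.range (m + 1),
          (m.choose l : ℝ) * (-x) ^ l / pqInt p q (m - l + 1) ^ k

/-!
Let `Λ` be the linear functional on `ℝ[t]` with `Λ(t^j) = 1/[j+1]_{p,q}^k`. Expanding falling
factorials `(y)_n = y(y-1)⋯(y-n+1)` in signed Stirling numbers of the first kind gives
`C_n(x) = Λ((t-x)_n)` and `Ĉ_n(x) = Λ((x-t)_n)`. Since `(-1)^n (-y)_n` is the rising factorial
`y^(n)`, both relations are `Λ` applied to the Lah expansion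
`y^(n) = ∑_m binom(n-1,m-1) (n!/m!) (y)_m`, at `y = x - t` and `y = t - x` respectively.
-/

open Polynomial

theorem stirling1_eq_stirlingFirst (n m : ℕ) : stirling1 n m = Nat.stirlingFirst n m := by
  induction n generalizing m with
  | zero => cases m <;> rfl
  | succ n ih => cases m <;> simp only [stirling1, Nat.stirlingFirst, ih]

theorem coeff_ascPochhammer {R : Type*} [CommSemiring R] (n m : ℕ) :
    (ascPochhammer R n).coeff m = stirling1 n m := by
  induction n generalizing m with
  | zero => cases m <;> simp [stirling1, coeff_one]
  | succ n ih =>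
    cases m with
    | zero => rw [ascPochhammer_succ_left, coeff_X_mul_zero, stirling1, Nat.cast_zero]
    | succ m =>
      rw [ascPochhammer_succ_right, mul_add, coeff_add, coeff_mul_X, coeff_mul_natCast, ih, ih,
        stirling1]
      push_cast
      ring

theorem coeff_descPochhammer {R : Type*} [CommRing R] (n m : ℕ) :
    (descPochhammer R n).coeff m = (-1) ^ (n - m) * stirling1 n m := by
  induction n generalizing m with
  | zero => cases m <;> simp [stirling1, coeff_one]
  | succ n ih =>
    cases m with
    | zero => rw [descPochhammer_succ_left, coeff_X_mul_zero, stirling1, Nat.cast_zero, mul_zero]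
    | succ m =>
      rw [descPochhammer_succ_right, ← C_eq_natCast, coeff_mul_X_sub_C, ih, ih, stirling1]
      rcases Nat.lt_or_ge n (m + 1) with h | h
      · simp [stirling1_eq_stirlingFirst, Nat.stirlingFirst_eq_zero_of_lt h]
      · obtain ⟨d, rfl⟩ := Nat.exists_eq_add_of_le h
        rw [show m + 1 + d - m = d + 1 by omega, show m + 1 + d + 1 - (m + 1) = d + 1 by omega,
          Nat.add_sub_cancel_left, pow_succ]
        push_cast
        ring

theorem ascPochhammer_comp_neg {R : Type*} [CommRing R] (n : ℕ) (g : R[X]) :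
    (ascPochhammer R n).comp (-g) = (-1 : R) ^ n • (descPochhammer R n).comp g := by
  induction n with
  | zero => simp
  | succ n ih =>
    rw [ascPochhammer_succ_right, descPochhammer_succ_right, mul_comp, mul_comp, ih]
    simp only [smul_eq_C_mul, add_comp, sub_comp, X_comp, natCast_comp, C_pow, C_neg, C_1]
    ring

theorem Polynomial.map_comp_eq_sum_range {R M : Type*} [CommSemiring R] [AddCommMonoid M]
    [Module R M] (Λ : R[X] →ₗ[R] M) (P g : R[X]) {N : ℕ} (hN : P.natDegree < N) :
    Λ (P.comp g) = ∑ m ∈ range N, P.coeff m • Λ (g ^ m) := by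
  rw [comp_eq_sum_left, sum_over_range' _ (fun _ => by simp) N hN, map_sum]
  simp only [C_mul', map_smul]

section Lah

variable {K : Type*} [Field K] [CharZero K]

theorem ascPochhammer_eval_eq_factorial_mul_choose (y : K) (n : ℕ) :
    (ascPochhammer K n).eval y = n.factorial * Ring.choose (y + n - 1) n := by
  rw [← ascPochhammer_smeval_eq_eval, ← Ring.factorial_nsmul_multichoose_eq_ascPochhammer,
    Ring.multichoose_eq, nsmul_eq_mul]

theorem descPochhammer_eval_eq_factorial_mul_choose (y : K) (n : ℕ) :
    (descPochhammer K n).eval y = n.factorial * Ring.choose y n := by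
  rw [descPochhammer_eval_eq_ascPochhammer, ← ascPochhammer_smeval_eq_eval,
    ← descPochhammer_smeval_eq_ascPochhammer, Ring.descPochhammer_eq_factorial_smul_choose,
    nsmul_eq_mul]

/-- The Lah expansion, from Chu–Vandermonde:
`binom(y+n-1, n) = ∑_m binom(y, m) binom(n-1, n-m)`. -/
theorem ascPochhammer_eq_sum_descPochhammer {n : ℕ} (hn : n ≠ 0) :
    ascPochhammer K n = ∑ m ∈ Icc 1 n,
      ((n - 1).choose (m - 1) * (n.factorial / m.factorial : K)) • descPochhammer K m := by
  refine Polynomial.funext fun y => ?_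
  have hshift : y + n - 1 = y + ((n - 1 : ℕ) : K) := by
    rw [Nat.cast_pred (Nat.pos_of_ne_zero hn)]; ring
  rw [ascPochhammer_eval_eq_factorial_mul_choose, hshift, Ring.add_choose_eq _ (Commute.all _ _),
    Nat.sum_antidiagonal_eq_sum_range_succ_mk, range_eq_Ico,
    sum_eq_sum_Ico_succ_bot n.succ_pos, zero_add, Nat.succ_eq_add_one, Ico_add_one_right_eq_Icc,
    eval_finsetSum, mul_add, mul_sum]
  simp only [Ring.choose_natCast, Nat.sub_zero, eval_smul, smul_eq_mul,
    Nat.choose_eq_zero_of_lt (Nat.sub_lt_self one_pos (Nat.pos_of_ne_zero hn)), Nat.cast_zero,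
    mul_zero, zero_add]
  refine sum_congr rfl fun m hm => ?_
  obtain ⟨hm1, hmn⟩ := mem_Icc.mp hm
  have : (m.factorial : K) ≠ 0 := Nat.cast_ne_zero.mpr m.factorial_ne_zero
  rw [descPochhammer_eval_eq_factorial_mul_choose,
    Nat.choose_symm_of_eq_add (show n - 1 = (n - m) + (m - 1) by omega)]
  field_simp

theorem neg_one_pow_mul_map_descPochhammer_comp_div_factorial (Λ : K[X] →ₗ[K] K) (g : K[X])
    {n : ℕ} (hn : n ≠ 0) :
    (-1) ^ n * Λ ((descPochhammer K n).comp g) / n.factorial =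
      ∑ m ∈ Icc 1 n,
        (n - 1).choose (m - 1) * Λ ((descPochhammer K m).comp (-g)) / m.factorial := by
  have hneg : (-1) ^ n * Λ ((descPochhammer K n).comp g) = Λ ((ascPochhammer K n).comp (-g)) := by
    rw [ascPochhammer_comp_neg, map_smul, smul_eq_mul]
  rw [hneg, ascPochhammer_eq_sum_descPochhammer hn, Polynomial.sum_comp, map_sum, sum_div]
  refine sum_congr rfl fun m _ => ?_
  have : (n.factorial : K) ≠ 0 := Nat.cast_ne_zero.mpr n.factorial_ne_zero
  rw [smul_comp, map_smul, smul_eq_mul]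
  field_simp

end Lah

/-- The `(p,q)`-analogue of the `k`-fold iterated integral over `[0,1]` that defines
poly-Cauchy numbers. -/
noncomputable def pqIntegral (p q : ℝ) (k : ℤ) : ℝ[X] →ₗ[ℝ] ℝ :=
  lsum fun j => (1 / pqInt p q (j + 1) ^ k) • LinearMap.id

theorem pqIntegral_monomial (p q : ℝ) (k : ℤ) (j : ℕ) (a : ℝ) :
    pqIntegral p q k (monomial j a) = a / pqInt p q (j + 1) ^ k := by
  simp [pqIntegral, div_eq_mul_inv, mul_comm]

theorem pqIntegral_X_sub_C_pow (p q : ℝ) (k : ℤ) (x : ℝ) (m : ℕ) :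
    pqIntegral p q k ((X - C x) ^ m) =
      ∑ l ∈ range (m + 1), (m.choose l : ℝ) * (-x) ^ l / pqInt p q (m - l + 1) ^ k := by
  rw [sub_eq_neg_add, ← C_neg, add_pow, map_sum]
  refine sum_congr rfl fun l _ => ?_
  rw [← C_pow, ← C_eq_natCast, mul_comm, ← mul_assoc, ← C_mul, C_mul_X_pow_eq_monomial,
    pqIntegral_monomial, mul_comm]

theorem pqCauchy1_eq_pqIntegral (p q : ℝ) (k : ℤ) (x : ℝ) (n : ℕ) :
    pqCauchy1 p q k x n = pqIntegral p q k ((descPochhammer ℝ n).comp (X - C x)) := by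
  rw [map_comp_eq_sum_range _ _ _ (N := n + 1) (by rw [descPochhammer_natDegree]; omega),
    pqCauchy1]
  simp only [coeff_descPochhammer, pqIntegral_X_sub_C_pow, smul_eq_mul]

theorem pqCauchy2_eq_pqIntegral (p q : ℝ) (k : ℤ) (x : ℝ) (n : ℕ) :
    pqCauchy2 p q k x n = pqIntegral p q k ((descPochhammer ℝ n).comp (C x - X)) := by
  calc pqCauchy2 p q k x n
      = (-1) ^ n * pqIntegral p q k ((ascPochhammer ℝ n).comp (-(C x - X))) := by
        rw [neg_sub, map_comp_eq_sum_range _ _ _ (N := n + 1)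
          (by rw [ascPochhammer_natDegree]; omega), pqCauchy2]
        simp only [coeff_ascPochhammer, pqIntegral_X_sub_C_pow, smul_eq_mul]
    _ = pqIntegral p q k ((descPochhammer ℝ n).comp (C x - X)) := by
        rw [ascPochhammer_comp_neg, map_smul, smul_eq_mul, ← mul_assoc, ← mul_pow]
        norm_num

theorem pqPolyCauchy_first_second_kind_relations_general
    (p q : ℝ) (k : ℤ) :
    ∀ (n : ℕ), 1 ≤ n → ∀ x : ℝ,
      ((-1 : ℝ) ^ n * pqCauchy1 p q k x n / (n.factorial : ℝ) =
        ∑ m ∈ Finset.Icc 1 n,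
          ((n - 1).choose (m - 1) : ℝ) * pqCauchy2 p q k x m / (m.factorial : ℝ)) ∧
      ((-1 : ℝ) ^ n * pqCauchy2 p q k x n / (n.factorial : ℝ) =
        ∑ m ∈ Finset.Icc 1 n,
          ((n - 1).choose (m - 1) : ℝ) * pqCauchy1 p q k x m / (m.factorial : ℝ)) := by
  intro n hn x
  have hn0 : n ≠ 0 := Nat.one_le_iff_ne_zero.mp hn
  simp only [pqCauchy1_eq_pqIntegral, pqCauchy2_eq_pqIntegral]
  constructor
  · have h :=
      neg_one_pow_mul_map_descPochhammer_comp_div_factorial (pqIntegral p q k) (X - C x) hn0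
    rwa [neg_sub] at h
  · have h :=
      neg_one_pow_mul_map_descPochhammer_comp_div_factorial (pqIntegral p q k) (C x - X) hn0
    rwa [neg_sub] at h

theorem pqPolyCauchy_first_second_kind_relations
    (p q : ℝ) (hq : 0 < q) (hqp : q < p) (hp : p ≤ 1) (k : ℤ) :
    ∀ (n : ℕ), 1 ≤ n → ∀ x : ℝ,
      ((-1 : ℝ) ^ n * pqCauchy1 p q k x n / (n.factorial : ℝ) =
        ∑ m ∈ Finset.Icc 1 n,
          ((n - 1).choose (m - 1) : ℝ) * pqCauchy2 p q k x m / (m.factorial : ℝ)) ∧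
      ((-1 : ℝ) ^ n * pqCauchy2 p q k x n / (n.factorial : ℝ) =
        ∑ m ∈ Finset.Icc 1 n,
          ((n - 1).choose (m - 1) : ℝ) * pqCauchy1 p q k x m / (m.factorial : ℝ)) :=
  pqPolyCauchy_first_second_kind_relations_general p q k
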